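/- arXiv:1506.05604 — 2 statements merged into one kernel-verified Lean document; each statement's English description precedes it below -/
import Mathlib

section
/- Let H be a finite abelian group, α : H → ℂ* a homomorphism with m = |H|/|Ker α|, and k ≥ 1 an integer. Then ∏_{g ∈ H} (1 − α(g)^{-k} t^k) = (1 − t^{lcm(k,m)})^{k|H|/lcm(k,m)} as polynomials in ℂ[t]. In particular k|H| is divisible by lcm(k, m). -/
/-! After reindexing by `g ↦ g⁻¹`, the values `α(g)^k` form the image of the character `α^k`,
a finite, hence cyclic, subgroup of `ℂˣ` of order `n = m / gcd(m, k)`, and each value is taken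
`|Ker α^k|` times. A cyclic group of order `n` is generated by a primitive `n`-th root of unity `ζ`,
and `∏_{i<n} (1 - ζ^i x) = 1 - x^n`. Finally `k n = lcm(k, m)` and `|H| = n |Ker α^k|`. -/

open Finset Polynomial

theorem MonoidHom.prod_comp_of_surjective {G M N : Type*} [Group G] [Fintype G] [Monoid M]
    [Fintype M] [CommMonoid N] {β : G →* M} (hβ : Function.Surjective β) (f : M → N) :
    ∏ g, f (β g) = (∏ x, f x) ^ Nat.card β.ker := by
  classical
  have hfiber (x : M) : #{g | β g = x} = Nat.card β.ker := by
    rw [MonoidHom.card_fiber_eq_of_mem_range β (hβ x) ⟨1, map_one β⟩, Nat.card_eq_fintype_card,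
      Fintype.card_subtype]
    simp only [MonoidHom.mem_ker]
  rw [Finset.prod_comp, image_univ_of_surjective hβ, ← prod_pow]
  exact prod_congr rfl fun x _ => by rw [hfiber]

theorem IsPrimitiveRoot.prod_one_sub_pow_mul_eq {R : Type*} [CommRing R] [IsDomain R] {ζ : R}
    {n : ℕ} (hζ : IsPrimitiveRoot ζ n) (hn : 0 < n) (x : R) :
    ∏ i ∈ range n, (1 - ζ ^ i * x) = 1 - x ^ n := by
  simpa [eval_prod] using congrArg (eval 1) (X_pow_sub_C_eq_prod hζ hn rfl).symm

theorem Subgroup.prod_one_sub_mul_eq {R : Type*} [CommRing R] [IsDomain R] (S : Subgroup Rˣ)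
    [Fintype S] (x : R) : ∏ u : S, (1 - ((u : Rˣ) : R) * x) = 1 - x ^ Nat.card S := by
  classical
  obtain ⟨ζ, hζ⟩ := IsCyclic.exists_generator (α := S)
  have horder : orderOf ζ = Nat.card S := orderOf_eq_card_of_forall_mem_zpowers hζ
  have hprim : IsPrimitiveRoot ((ζ : Rˣ) : R) (Nat.card S) := by
    rw [IsPrimitiveRoot.coe_units_iff, ← horder, ← Subgroup.orderOf_coe]
    exact IsPrimitiveRoot.orderOf _
  rw [← IsCyclic.image_range_card hζ, prod_image, ← hprim.prod_one_sub_pow_mul_eq Nat.card_pos]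
  · simp
  · rw [← horder]; exact (pow_injOn_Iio_orderOf).mono (by simp)

theorem MonoidHom.card_range_powMonoidHom_comp {G M : Type*} [Group G] [CommGroup M]
    (α : G →* M) [IsCyclic α.range] [Finite α.range] (k : ℕ) :
    Nat.card ((powMonoidHom k).comp α).range =
      Nat.card α.range / (Nat.card α.range).gcd k := by
  have hfactor : (powMonoidHom k).comp α =
      α.range.subtype.comp ((powMonoidHom k).comp α.rangeRestrict) := rfl
  rw [hfactor, MonoidHom.range_comp, Subgroup.card_map_of_injective α.range.subtype_injective,
    MonoidHom.range_comp, MonoidHom.range_eq_top.mpr α.rangeRestrict_surjective,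
    ← MonoidHom.range_eq_map, IsCyclic.card_powMonoidHom_range]

/-- For a character `α` of a finite abelian group `H` with
`m = |H|/|Ker α|` and `k ≥ 1`,
`∏_{g ∈ H} (1 − α(g)^{-k} t^k) = (1 − t^{lcm(k,m)})^{k|H|/lcm(k,m)}`,
and `lcm(k,m)` divides `k·|H|`. -/
theorem prod_char_values_eq_pow (H : Type*) [CommGroup H] [Fintype H] (α : H →* ℂˣ)
    (m : ℕ) (hm : m = Nat.card H / Nat.card α.ker) (k : ℕ) (hk : 1 ≤ k) :
    (∀ t : ℂ,
      ∏ g : H, (1 - (((α g)⁻¹ : ℂˣ) : ℂ) ^ k * t ^ k) =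
        (1 - t ^ Nat.lcm k m) ^ (k * Nat.card H / Nat.lcm k m)) ∧
    Nat.lcm k m ∣ k * Nat.card H := by
  classical
  set β := (powMonoidHom k).comp α
  have hm_range : m = Nat.card α.range := by
    rw [hm, ← α.ker.card_mul_index, Subgroup.index_ker, Nat.mul_div_cancel_left _ Nat.card_pos]
  have hk_range : k * Nat.card β.range = Nat.lcm k m := by
    rw [α.card_range_powMonoidHom_comp, ← hm_range, Nat.gcd_comm,
      ← Nat.mul_div_assoc _ (Nat.gcd_dvd_right k m)]
    rfl
  have hk_card : k * Nat.card H = Nat.lcm k m * Nat.card β.ker := by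
    rw [← β.ker.card_mul_index, Subgroup.index_ker, ← hk_range]
    ring
  refine ⟨fun t => ?_, Dvd.intro _ hk_card.symm⟩
  have hlcm_pos : 0 < Nat.lcm k m := Nat.lcm_pos hk (hm_range ▸ Nat.card_pos)
  calc ∏ g : H, (1 - (((α g)⁻¹ : ℂˣ) : ℂ) ^ k * t ^ k)
      = ∏ g : H, (1 - ((β.rangeRestrict g : β.range) : ℂˣ) * t ^ k) :=
        Fintype.prod_equiv (Equiv.inv H) _ _ fun g => by simp [β]
    _ = (1 - (t ^ k) ^ Nat.card β.range) ^ Nat.card β.ker := by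
      rw [β.rangeRestrict.prod_comp_of_surjective β.rangeRestrict_surjective
          (fun u => 1 - ((u : ℂˣ) : ℂ) * t ^ k),
        MonoidHom.ker_rangeRestrict, Subgroup.prod_one_sub_mul_eq]
    _ = (1 - t ^ Nat.lcm k m) ^ (k * Nat.card H / Nat.lcm k m) := by
      rw [← pow_mul, hk_range, hk_card, Nat.mul_div_cancel_left _ hlcm_pos]
end

section
/- Let 𝒢 be a finite abelian group with character group 𝒢* = Hom(𝒢, ℂ*), and let G, H ≤ 𝒢 be subgroups with dual subgroups G̃, H̃ ≤ 𝒢*. Let h ∈ 𝒢 and let α̃ ∈ 𝒢* be any character; set k = |⟨h⟩ + G + H| / |G + H| and k' = |⟨α̃⟩ + G̃ + H̃| / |G̃ + H̃|. Suppose α : H → ℂ* is the restriction of α̃ to H, and define m = |G ∩ H| / |{g ∈ G ∩ H : α(g) = 1}|. Then k' = m, i.e. the order of the image of α restricted to G ∩ H equals the index |⟨α̃⟩ + G̃ + H̃| / |G̃ + H̃|. -/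
/-- The dual subgroup of `K ≤ G` inside the character group `G →* ℂˣ`. -/
def dualSubgroup {G : Type*} [CommGroup G] (K : Subgroup G) : Subgroup (G →* ℂˣ) where
  carrier := {γ | ∀ a ∈ K, γ a = 1}
  one_mem' := by intro a _; rfl
  mul_mem' := by intro γ δ hγ hδ a ha; simp [hγ a ha, hδ a ha]
  inv_mem' := by intro γ hγ a ha; simp [hγ a ha]

section Aux

variable {A : Type*} [CommGroup A] [Finite A]

lemma enoughRoots (A : Type*) [CommGroup A] [Finite A] :
    HasEnoughRootsOfUnity ℂ (Monoid.exponent A) := by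
  have : NeZero (Monoid.exponent A) := ⟨Monoid.exponent_ne_zero_of_finite⟩
  infer_instance

/-- The character group of a finite abelian group has the same cardinality. -/
lemma card_charGroup (A : Type*) [CommGroup A] [Finite A] :
    Nat.card (A →* ℂˣ) = Nat.card A := by
  have := enoughRoots A
  obtain ⟨e⟩ := CommGroup.monoidHom_mulEquiv_of_hasEnoughRootsOfUnity A ℂ
  exact Nat.card_congr e.toEquiv

instance : Finite (A →* ℂˣ) := by
  have := enoughRoots A
  obtain ⟨e⟩ := CommGroup.monoidHom_mulEquiv_of_hasEnoughRootsOfUnity A ℂ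
  exact Finite.of_equiv A e.symm.toEquiv

/-- Characters vanishing on `K` are exactly characters of `A ⧸ K`. -/
lemma card_dualSubgroup (K : Subgroup A) :
    Nat.card (dualSubgroup K) * Nat.card K = Nat.card A := by
  have hbij : Function.Bijective
      (fun ψ : (A ⧸ K) →* ℂˣ ↦
        (⟨ψ.comp (QuotientGroup.mk' K), fun a ha ↦ by
          simp only [MonoidHom.comp_apply, QuotientGroup.mk'_apply]
          rw [(QuotientGroup.eq_one_iff a).mpr ha, map_one]⟩ : dualSubgroup K)) := by
    constructor
    · intro ψ₁ ψ₂ h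
      have h' : ψ₁.comp (QuotientGroup.mk' K) = ψ₂.comp (QuotientGroup.mk' K) :=
        Subtype.ext_iff.mp h
      exact MonoidHom.ext fun x ↦
        QuotientGroup.induction_on x fun a ↦ DFunLike.congr_fun h' a
    · rintro ⟨γ, hγ⟩
      refine ⟨QuotientGroup.lift K γ (fun a ha ↦ hγ a ha), ?_⟩
      ext a
      rfl
  have h1 : Nat.card (dualSubgroup K) = Nat.card (A ⧸ K) := by
    rw [← Nat.card_congr (Equiv.ofBijective _ hbij), card_charGroup]
  rw [h1, ← Subgroup.card_eq_card_quotient_mul_card_subgroup]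

/-- The annihilator in `A` of a subgroup of the character group. -/
def annih (Γ : Subgroup (A →* ℂˣ)) : Subgroup A where
  carrier := {g | ∀ γ ∈ Γ, γ g = 1}
  one_mem' := by intro γ _; exact map_one γ
  mul_mem' := by intro g h hg hh γ hγ; simp [map_mul, hg γ hγ, hh γ hγ]
  inv_mem' := by intro g hg γ hγ; simp [hg γ hγ]

/-- Evaluation at `g`, as a character of the character group. -/
def evalHom (g : A) : (A →* ℂˣ) →* ℂˣ where
  toFun γ := γ g
  map_one' := rfl
  map_mul' _ _ := rfl

lemma annih_dualSubgroup (K : Subgroup A) : annih (dualSubgroup K) = K := by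
  refine le_antisymm ?_ (fun g hg γ hγ ↦ hγ g hg)
  intro g hg
  by_contra hgK
  have := enoughRoots (A ⧸ K)
  have hne : (QuotientGroup.mk' K g : A ⧸ K) ≠ 1 := by
    simpa [QuotientGroup.eq_one_iff] using hgK
  obtain ⟨ψ, hψ⟩ := CommGroup.exists_apply_ne_one_of_hasEnoughRootsOfUnity (A ⧸ K) ℂ hne
  have hmem : ψ.comp (QuotientGroup.mk' K) ∈ dualSubgroup K := fun a ha ↦ by
    simp only [MonoidHom.comp_apply, QuotientGroup.mk'_apply]
    rw [(QuotientGroup.eq_one_iff a).mpr ha, map_one]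
  exact hψ (hg _ hmem)

lemma annih_sup (Γ₁ Γ₂ : Subgroup (A →* ℂˣ)) :
    annih (Γ₁ ⊔ Γ₂) = annih Γ₁ ⊓ annih Γ₂ := by
  refine le_antisymm
    (fun g hg ↦ ⟨fun γ hγ ↦ hg γ (Subgroup.mem_sup_left hγ),
      fun γ hγ ↦ hg γ (Subgroup.mem_sup_right hγ)⟩) ?_
  rintro g ⟨h1, h2⟩ γ hγ
  have : Γ₁ ⊔ Γ₂ ≤ (evalHom g).ker :=
    sup_le (fun δ hδ ↦ h1 δ hδ) (fun δ hδ ↦ h2 δ hδ)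
  exact this hγ

lemma annih_closure_singleton (α : A →* ℂˣ) :
    annih (Subgroup.closure {α}) = α.ker := by
  refine le_antisymm (fun g hg ↦ hg α (Subgroup.subset_closure rfl)) ?_
  intro g hg γ hγ
  have : Subgroup.closure {α} ≤ (evalHom g).ker :=
    (Subgroup.closure_le _).mpr (by simpa using (show evalHom g α = 1 from hg))
  exact this hγ

/-- The evaluation homomorphism `A →* A**`. -/
def evalFull : A →* ((A →* ℂˣ) →* ℂˣ) where
  toFun := evalHom
  map_one' := by ext γ; simp [evalHom]
  map_mul' g h := by ext γ; simp [evalHom]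

lemma evalFull_bijective : Function.Bijective (evalFull (A := A)) := by
  have hinj : Function.Injective (evalFull (A := A)) := by
    rw [injective_iff_map_eq_one]
    intro g hg
    by_contra hne
    have := enoughRoots A
    obtain ⟨γ, hγ⟩ := CommGroup.exists_apply_ne_one_of_hasEnoughRootsOfUnity A ℂ hne
    exact hγ (DFunLike.congr_fun hg γ)
  have hcard : Nat.card A = Nat.card ((A →* ℂˣ) →* ℂˣ) := by
    rw [card_charGroup, card_charGroup]
  exact (Nat.bijective_iff_injective_and_card _).mpr ⟨hinj, hcard⟩

lemma card_annih_mul_card (Γ : Subgroup (A →* ℂˣ)) :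
    Nat.card (annih Γ) * Nat.card Γ = Nat.card A := by
  have hbij : Function.Bijective
      (fun g : annih Γ ↦ (⟨evalFull g.1, fun γ hγ ↦ g.2 γ hγ⟩ : dualSubgroup Γ)) := by
    constructor
    · intro g h hgh
      exact Subtype.ext (evalFull_bijective.1 (congrArg Subtype.val hgh))
    · rintro ⟨φ, hφ⟩
      obtain ⟨g, rfl⟩ := evalFull_bijective.2 φ
      exact ⟨⟨g, fun γ hγ ↦ hφ γ hγ⟩, rfl⟩
  have h2 : Nat.card (annih Γ) = Nat.card (dualSubgroup Γ) :=
    Nat.card_congr (Equiv.ofBijective _ hbij)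
  rw [h2, card_dualSubgroup, card_charGroup]

end Aux

/-- With `G, H ≤ 𝒢`, a character `α̃ ∈ 𝒢*` (whose restriction to `H` is `α`),
the index `k' = |⟨α̃⟩ + G̃ + H̃| / |G̃ + H̃|` equals
`m = |G ∩ H| / |{g ∈ G ∩ H : α(g) = 1}|`, the order of the image of `α` restricted
to `G ∩ H`. -/
theorem kprime_eq_m (𝒢 : Type*) [CommGroup 𝒢] [Finite 𝒢] (G₁ H : Subgroup 𝒢)
    (αext : 𝒢 →* ℂˣ) :
    Nat.card (Subgroup.closure {αext} ⊔ dualSubgroup G₁ ⊔ dualSubgroup H :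
        Subgroup (𝒢 →* ℂˣ)) /
      Nat.card (dualSubgroup G₁ ⊔ dualSubgroup H : Subgroup (𝒢 →* ℂˣ)) =
    Nat.card (G₁ ⊓ H : Subgroup 𝒢) /
      Nat.card (αext.ker ⊓ G₁ ⊓ H : Subgroup 𝒢) := by
  set a := Nat.card (Subgroup.closure {αext} ⊔ dualSubgroup G₁ ⊔ dualSubgroup H :
      Subgroup (𝒢 →* ℂˣ))
  set b := Nat.card (dualSubgroup G₁ ⊔ dualSubgroup H : Subgroup (𝒢 →* ℂˣ))
  set c := Nat.card (G₁ ⊓ H : Subgroup 𝒢)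
  set d := Nat.card (αext.ker ⊓ G₁ ⊓ H : Subgroup 𝒢)
  have hb : b * c = Nat.card 𝒢 := by
    have := card_annih_mul_card (dualSubgroup G₁ ⊔ dualSubgroup H)
    rwa [annih_sup, annih_dualSubgroup, annih_dualSubgroup, mul_comm] at this
  have ha : a * d = Nat.card 𝒢 := by
    have := card_annih_mul_card (Subgroup.closure {αext} ⊔ dualSubgroup G₁ ⊔ dualSubgroup H)
    rwa [annih_sup, annih_sup, annih_dualSubgroup, annih_dualSubgroup,
      annih_closure_singleton, mul_comm] at this
  have hdvd : d ∣ c :=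
    Subgroup.card_dvd_of_le (inf_le_inf_right H inf_le_right)
  obtain ⟨m, hm⟩ := hdvd
  have hd : 0 < d := @Nat.card_pos _ ⟨1⟩ _
  have hbpos : 0 < b := @Nat.card_pos _ ⟨1⟩ _
  have ham : a = b * m :=
    Nat.eq_of_mul_eq_mul_right hd (by rw [ha, ← hb, hm]; ring)
  rw [ham, hm, Nat.mul_div_cancel_left m hbpos, Nat.mul_div_cancel_left m hd]
end
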